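/- arXiv:1910.04667 — 4 statements merged into one kernel-verified Lean document; each statement's English description precedes it below -/
import Mathlib

section
/- Existence (Theorem 1, existence part): With F as above and R = {i : α_i > 0}, for any target demand D ∈ [∑_{i∈R} pmin_i + ∑_{j∉R} sat_j(p0_j), ∑_{i∈R} pmax_i + ∑_{j∉R} sat_j(p0_j)], there exists s ∈ ℝ with F(s) = D. -/
/-! Each clamped term `max pmin (min (p0 + α s) pmax)` is eventually constant as `s → ±∞`:
equal to `pmin` resp. `pmax` when `α > 0`, and to its value at `s = 0` when `α = 0`. Hence the
continuous total output takes both endpoints of the demand interval, and the intermediate value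
theorem on `ℝ` gives every value in between. -/

open Filter Finset

section Clamp

variable {lo hi c a : ℝ}

lemma eventually_max_min_affine_eq_atTop (ha : 0 ≤ a) (hlo : lo ≤ hi) :
    ∀ᶠ s in atTop, max lo (min (c + a * s) hi) = if 0 < a then hi else max lo (min c hi) := by
  split_ifs with hpos
  · have hlin : Tendsto (fun s => c + a * s) atTop atTop :=
      tendsto_atTop_add_const_left _ c (tendsto_id.const_mul_atTop hpos)
    filter_upwards [hlin.eventually_ge_atTop hi] with s hs
    rw [min_eq_right hs, max_eq_right hlo]
  · simp [le_antisymm (not_lt.mp hpos) ha]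

lemma eventually_max_min_affine_eq_atBot (ha : 0 ≤ a) :
    ∀ᶠ s in atBot, max lo (min (c + a * s) hi) = if 0 < a then lo else max lo (min c hi) := by
  split_ifs with hpos
  · have hlin : Tendsto (fun s => c + a * s) atBot atBot :=
      tendsto_atBot_add_const_left _ c (tendsto_id.const_mul_atBot hpos)
    filter_upwards [hlin.eventually_le_atBot lo] with s hs
    exact max_eq_left ((min_le_left _ _).trans hs)
  · simp [le_antisymm (not_lt.mp hpos) ha]

end Clamp

lemma Finset.eventually_sum_eq_sum {ι X : Type*} {l : Filter X} (s : Finset ι)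
    {f : ι → X → ℝ} {g : ι → ℝ} (h : ∀ i ∈ s, ∀ᶠ x in l, f i x = g i) :
    ∀ᶠ x in l, ∑ i ∈ s, f i x = ∑ i ∈ s, g i := by
  filter_upwards [(eventually_all_finset s).2 h] with x hx
  exact sum_congr rfl hx

theorem totalOutput_existence_general {ι : Type*} (G : Finset ι)
    (pmin pmax p0 α : ι → ℝ)
    (hbd : ∀ i ∈ G, pmin i ≤ pmax i)
    (hα : ∀ i ∈ G, 0 ≤ α i)
    (D : ℝ)
    (hD : D ∈ Set.Icc
      ((∑ i ∈ G.filter (fun i => 0 < α i), pmin i) +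
        ∑ j ∈ G.filter (fun i => ¬ 0 < α i), max (pmin j) (min (p0 j) (pmax j)))
      ((∑ i ∈ G.filter (fun i => 0 < α i), pmax i) +
        ∑ j ∈ G.filter (fun i => ¬ 0 < α i), max (pmin j) (min (p0 j) (pmax j)))) :
    ∃ s : ℝ, ∑ i ∈ G, max (pmin i) (min (p0 i + α i * s) (pmax i)) = D := by
  obtain ⟨a, ha⟩ := (G.eventually_sum_eq_sum fun i hi =>
    eventually_max_min_affine_eq_atBot (lo := pmin i) (hi := pmax i) (c := p0 i) (hα i hi)).exists
  obtain ⟨b, hb⟩ := (G.eventually_sum_eq_sum fun i hi =>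
    eventually_max_min_affine_eq_atTop (c := p0 i) (hα i hi) (hbd i hi)).exists
  rw [sum_ite] at ha hb
  rw [← ha, ← hb] at hD
  exact intermediate_value_univ a b (by fun_prop) hD

theorem totalOutput_existence {ι : Type*} [DecidableEq ι] (G : Finset ι) (hG : G.Nonempty)
    (pmin pmax p0 α : ι → ℝ)
    (hbd : ∀ i ∈ G, pmin i ≤ pmax i)
    (hα : ∀ i ∈ G, 0 ≤ α i)
    (hsum : ∑ i ∈ G, α i = 1)
    (D : ℝ)
    (hD : D ∈ Set.Icc
      ((∑ i ∈ G.filter (fun i => 0 < α i), pmin i) +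
        ∑ j ∈ G.filter (fun i => ¬ 0 < α i), max (pmin j) (min (p0 j) (pmax j)))
      ((∑ i ∈ G.filter (fun i => 0 < α i), pmax i) +
        ∑ j ∈ G.filter (fun i => ¬ 0 < α i), max (pmin j) (min (p0 j) (pmax j)))) :
    ∃ s : ℝ, ∑ i ∈ G, max (pmin i) (min (p0 i + α i * s) (pmax i)) = D :=
  totalOutput_existence_general G pmin pmax p0 α hbd hα D hD
end

section
/- Uniqueness of outputs (Theorem 1, uniqueness of p): If s1, s2 ∈ ℝ both satisfy F(s1) = F(s2) = D, then for every i ∈ G, sat_i(p0_i + α_i s1) = sat_i(p0_i + α_i s2); i.e., although the slack s may not be unique, the individual generation levels p_i are unique. -/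
theorem Finset.apply_eq_apply_of_sum_eq_of_monotone {ι α M : Type*} [LinearOrder α]
    [AddCommMonoid M] [PartialOrder M] [IsOrderedCancelAddMonoid M]
    {G : Finset ι} {f : ι → α → M} (hf : ∀ i ∈ G, Monotone (f i)) {s t : α}
    (h : ∑ i ∈ G, f i s = ∑ i ∈ G, f i t) : ∀ i ∈ G, f i s = f i t := by
  rcases le_total s t with hst | hts
  · exact (Finset.sum_eq_sum_iff_of_le fun i hi => hf i hi hst).mp h
  · exact fun i hi => ((Finset.sum_eq_sum_iff_of_le fun i hi => hf i hi hts).mp h.symm i hi).symm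

theorem monotone_max_min_affine (lo b hi : ℝ) {c : ℝ} (hc : 0 ≤ c) :
    Monotone fun s : ℝ => max lo (min (b + c * s) hi) :=
  monotone_const.max ((monotone_id.const_mul hc).const_add b |>.min monotone_const)

theorem totalOutput_unique_generation_general {ι : Type*} (G : Finset ι)
    (pmin pmax p0 α : ι → ℝ)
    (hα : ∀ i ∈ G, 0 ≤ α i)
    (D s1 s2 : ℝ)
    (h1 : ∑ i ∈ G, max (pmin i) (min (p0 i + α i * s1) (pmax i)) = D)
    (h2 : ∑ i ∈ G, max (pmin i) (min (p0 i + α i * s2) (pmax i)) = D) :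
    ∀ i ∈ G, max (pmin i) (min (p0 i + α i * s1) (pmax i)) =
      max (pmin i) (min (p0 i + α i * s2) (pmax i)) :=
  Finset.apply_eq_apply_of_sum_eq_of_monotone
    (fun i hi => monotone_max_min_affine (pmin i) (p0 i) (pmax i) (hα i hi)) (h1.trans h2.symm)

theorem totalOutput_unique_generation {ι : Type*} (G : Finset ι)
    (pmin pmax p0 α : ι → ℝ)
    (hbd : ∀ i ∈ G, pmin i ≤ pmax i)
    (hα : ∀ i ∈ G, 0 ≤ α i)
    (hsum : ∑ i ∈ G, α i = 1)
    (D s1 s2 : ℝ)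
    (h1 : ∑ i ∈ G, max (pmin i) (min (p0 i + α i * s1) (pmax i)) = D)
    (h2 : ∑ i ∈ G, max (pmin i) (min (p0 i + α i * s2) (pmax i)) = D) :
    ∀ i ∈ G, max (pmin i) (min (p0 i + α i * s1) (pmax i)) =
      max (pmin i) (min (p0 i + α i * s2) (pmax i)) :=
  totalOutput_unique_generation_general G pmin pmax p0 α hα D s1 s2 h1 h2
end

section
/- Nonuniqueness of slack at the boundary (Theorem 1, 'only if' direction): If D = ∑_{i∈R} pmax_i + ∑_{j∉R} sat_j(p0_j) (the right endpoint of the feasible interval), then every s ≥ max_{i∈R} (pmax_i - p0_i)/α_i satisfies F(s) = D; in particular the solution set for s is an unbounded interval, so s is not unique. -/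
lemma max_min_eq_of_le {α : Type*} [LinearOrder α] {a b x : α} (hab : a ≤ b) (hbx : b ≤ x) :
    max a (min x b) = b := by
  rw [min_eq_right hbx, max_eq_right hab]

lemma le_add_mul_of_sub_div_le {a c p s : ℝ} (ha : 0 < a) (h : (c - p) / a ≤ s) :
    c ≤ p + a * s := by
  rw [div_le_iff₀ ha] at h
  linarith

theorem slack_nonunique_at_boundary_general {ι : Type*} (G : Finset ι)
    (pmin pmax p0 α : ι → ℝ)
    (hbd : ∀ i ∈ G, pmin i ≤ pmax i)
    (hα : ∀ i ∈ G, 0 ≤ α i)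
    (D : ℝ)
    (hD : D = (∑ i ∈ G.filter (fun i => 0 < α i), pmax i) +
      ∑ j ∈ G.filter (fun i => ¬ 0 < α i), max (pmin j) (min (p0 j) (pmax j))) :
    ∀ s : ℝ, (∀ i ∈ G, 0 < α i → (pmax i - p0 i) / α i ≤ s) →
      ∑ i ∈ G, max (pmin i) (min (p0 i + α i * s) (pmax i)) = D := by
  intro s hs
  rw [hD, ← Finset.sum_filter_add_sum_filter_not G (fun i => 0 < α i)]
  congr 1
  · refine Finset.sum_congr rfl fun i hi => ?_
    obtain ⟨hiG, hpos⟩ := Finset.mem_filter.mp hi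
    exact max_min_eq_of_le (hbd i hiG) (le_add_mul_of_sub_div_le hpos (hs i hiG hpos))
  · refine Finset.sum_congr rfl fun i hi => ?_
    obtain ⟨hiG, hnpos⟩ := Finset.mem_filter.mp hi
    rw [le_antisymm (not_lt.mp hnpos) (hα i hiG), zero_mul, add_zero]

theorem slack_nonunique_at_boundary {ι : Type*} [DecidableEq ι] (G : Finset ι)
    (pmin pmax p0 α : ι → ℝ)
    (hbd : ∀ i ∈ G, pmin i ≤ pmax i)
    (hα : ∀ i ∈ G, 0 ≤ α i)
    (hsum : ∑ i ∈ G, α i = 1)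
    (D : ℝ)
    (hD : D = (∑ i ∈ G.filter (fun i => 0 < α i), pmax i) +
      ∑ j ∈ G.filter (fun i => ¬ 0 < α i), max (pmin j) (min (p0 j) (pmax j))) :
    ∀ s : ℝ, (∀ i ∈ G, 0 < α i → (pmax i - p0 i) / α i ≤ s) →
      ∑ i ∈ G, max (pmin i) (min (p0 i + α i * s) (pmax i)) = D :=
  slack_nonunique_at_boundary_general G pmin pmax p0 α hbd hα D hD
end

section
/- Approximation error bound: for all x ∈ ℝ, |g_τ(x; L, U) − sat(x)| ≤ τ/4, where sat(x) = max(L, min(x, U)) is the exact saturation function. In particular g_τ converges uniformly to sat as τ → 0. -/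
/-- The smooth saturation function of the paper. -/
noncomputable def gSmooth (τ L U : ℝ) (x : ℝ) : ℝ :=
  if x < L - τ then L
  else if x ≤ L + τ then L + (x - (L - τ))^2 / (4 * τ)
  else if x < U - τ then x
  else if x ≤ U + τ then U - (x - (U + τ))^2 / (4 * τ)
  else U

/-!
On each of the two transition intervals `[c - τ, c + τ]` the quadratic piece exceeds the corner
`max c x` by exactly `(|x - c| - τ)² / (4τ)`, which lies in `[0, τ/4]` because `|x - c| ≤ τ`;
the upper corner is the lower one reflected through `x ↦ -x`. Off these intervals `gSmooth`
agrees with the saturation exactly.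
-/

open Filter Topology

lemma sq_sub_div_le_quarter {τ d : ℝ} (hτ : 0 < τ) (hd : 0 ≤ d) (hdτ : d ≤ τ) :
    (d - τ) ^ 2 / (4 * τ) ≤ τ / 4 := by
  rw [div_le_div_iff₀ (by positivity) (by norm_num)]
  nlinarith

lemma corner_sub_max_eq {τ c x : ℝ} (hτ : 0 < τ) :
    c + (x - (c - τ)) ^ 2 / (4 * τ) - max c x = (|x - c| - τ) ^ 2 / (4 * τ) := by
  rcases le_total x c with hx | hx
  · rw [max_eq_left hx, abs_of_nonpos (sub_nonpos.2 hx)]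
    ring
  · rw [max_eq_right hx, abs_of_nonneg (sub_nonneg.2 hx)]
    field_simp
    ring

lemma abs_corner_sub_max_le {τ c x : ℝ} (hτ : 0 < τ) (hx : |x - c| ≤ τ) :
    |c + (x - (c - τ)) ^ 2 / (4 * τ) - max c x| ≤ τ / 4 := by
  rw [corner_sub_max_eq hτ, abs_of_nonneg (by positivity)]
  exact sq_sub_div_le_quarter hτ (abs_nonneg _) hx

lemma abs_corner_sub_min_le {τ c x : ℝ} (hτ : 0 < τ) (hx : |x - c| ≤ τ) :
    |c - (x - (c + τ)) ^ 2 / (4 * τ) - min x c| ≤ τ / 4 := by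
  have hreflect := abs_corner_sub_max_le (c := -c) (x := -x) hτ (by rwa [neg_sub_neg, abs_sub_comm])
  rw [← abs_neg]
  convert hreflect using 2
  rw [max_neg_neg, min_comm]
  ring

lemma abs_gSmooth_sub_sat_le {τ L U : ℝ} (hτ : 0 < τ) (hLU : L + τ < U - τ) (x : ℝ) :
    |gSmooth τ L U x - max L (min x U)| ≤ τ / 4 := by
  have hquarter : 0 ≤ τ / 4 := by positivity
  unfold gSmooth
  split_ifs with h₁ h₂ h₃ h₄
  · rw [min_eq_left (by linarith), max_eq_left (by linarith), sub_self, abs_zero]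
    exact hquarter
  · rw [min_eq_left (by linarith)]
    exact abs_corner_sub_max_le hτ (abs_sub_le_iff.2 ⟨by linarith, by linarith⟩)
  · rw [min_eq_left (by linarith), max_eq_right (by linarith), sub_self, abs_zero]
    exact hquarter
  · rw [max_eq_right (le_min (by linarith) (by linarith))]
    exact abs_corner_sub_min_le hτ (abs_sub_le_iff.2 ⟨by linarith, by linarith⟩)
  · rw [min_eq_right (by linarith), max_eq_right (by linarith), sub_self, abs_zero]
    exact hquarter

lemma tendstoUniformly_of_eventually_dist_le {ι α β : Type*} [PseudoMetricSpace β]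
    {F : ι → α → β} {f : α → β} {l : Filter ι} {b : ι → ℝ} (hb : Tendsto b l (𝓝 0))
    (hdist : ∀ᶠ i in l, ∀ x, dist (f x) (F i x) ≤ b i) : TendstoUniformly F f l :=
  Metric.tendstoUniformly_iff.2 fun _ hε =>
    (hdist.and (hb.eventually (gt_mem_nhds hε))).mono fun _ hi x => (hi.1 x).trans_lt hi.2

theorem gSmooth_approx_error (L U : ℝ) (hLU : L < U) :
    (∀ τ : ℝ, 0 < τ → L + τ < U - τ →
      ∀ x : ℝ, |gSmooth τ L U x - max L (min x U)| ≤ τ / 4) ∧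
    TendstoUniformly (fun (τ : ℝ) (x : ℝ) => gSmooth τ L U x)
      (fun x => max L (min x U)) (nhdsWithin 0 (Set.Ioi 0)) := by
  refine ⟨fun τ hτ hτLU x => abs_gSmooth_sub_sat_le hτ hτLU x, ?_⟩
  have hrate : Tendsto (fun τ : ℝ => τ / 4) (𝓝[>] 0) (𝓝 0) :=
    ((continuous_id.div_const 4).tendsto' 0 0 (zero_div 4)).mono_left nhdsWithin_le_nhds
  have hsmall : ∀ᶠ τ in 𝓝[>] (0 : ℝ), τ ∈ Set.Ioo 0 ((U - L) / 2) :=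
    Ioo_mem_nhdsGT (by linarith)
  refine tendstoUniformly_of_eventually_dist_le hrate (hsmall.mono fun τ hτ x => ?_)
  rw [dist_comm, Real.dist_eq]
  exact abs_gSmooth_sub_sat_le hτ.1 (by linarith [hτ.2]) x
end
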